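/- arXiv:2504.19993 — 5 statements merged into one kernel-verified Lean document; each statement's English description precedes it below -/
import Mathlib

section
/- Let v ≥ 1, let B ⊂ ℝ^v be a nonempty box (a product of compact intervals), and let f : B → ℝ^v be continuously differentiable. Assume that for every choice of points χ₁, …, χ_v ∈ B, the v×v matrix M whose i-th row is the gradient of the i-th component of f evaluated at χ_i (i.e., M_{ij} = ∂f_i/∂x_j(χ_i)) is invertible. Then f is injective on B, and f possesses a continuously differentiable inverse defined on the image f(B). -/
/-!
Applying the mean value theorem to each component `fᵢ` separately gives
`f y - f x = M (y - x)` with `M` a mixed-point Jacobian. These matrices form a compact family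
of invertible matrices, so `c ‖w‖ ≤ ‖M w‖` for a uniform `c > 0`, whence
`c ‖y - x‖ ≤ ‖f y - f x‖`: `f` is injective on `B` and its inverse is Lipschitz. Each `f' x` is
the mixed-point Jacobian at the constant choice `χ i = x`, hence invertible, and a continuous
inverse of a map with continuous invertible derivative is C¹.
-/

open Set Function
open scoped Matrix

section MixedJacobian

variable {ι : Type*} [Fintype ι] [DecidableEq ι]

def mixedJacobian (f' : (ι → ℝ) → (ι → ℝ) →L[ℝ] (ι → ℝ)) (χ : ι → ι → ℝ) : Matrix ι ι ℝ :=
  Matrix.of fun i j => f' (χ i) (Pi.single j 1) i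

variable {f' : (ι → ℝ) → (ι → ℝ) →L[ℝ] (ι → ℝ)}

theorem mixedJacobian_const (x : ι → ℝ) :
    mixedJacobian f' (fun _ => x) = LinearMap.toMatrix' (f' x : (ι → ℝ) →ₗ[ℝ] ι → ℝ) := by
  ext i j
  simp [mixedJacobian, LinearMap.toMatrix'_apply]

theorem mixedJacobian_mulVec_apply (χ : ι → ι → ℝ) (w : ι → ℝ) (i : ι) :
    (mixedJacobian f' χ *ᵥ w) i = f' (χ i) w i := by
  have := congrFun (LinearMap.toMatrix'_mulVec (f' (χ i) : (ι → ℝ) →ₗ[ℝ] ι → ℝ) w) i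
  rwa [← mixedJacobian_const] at this

theorem ContinuousOn.mixedJacobian {s : Set (ι → ℝ)} (hf' : ContinuousOn f' s) :
    ContinuousOn (mixedJacobian f') (univ.pi fun _ => s) := by
  refine continuousOn_pi.2 fun i => continuousOn_pi.2 fun j => ?_
  have hrow : ContinuousOn (fun χ : ι → ι → ℝ => f' (χ i)) (univ.pi fun _ => s) :=
    hf'.comp (continuous_apply i).continuousOn fun χ hχ => hχ i (mem_univ i)
  exact ((continuous_apply i).comp
    (ContinuousLinearMap.apply ℝ (ι → ℝ) (Pi.single j 1)).continuous).comp_continuousOn hrow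

theorem ContinuousLinearMap.IsInvertible.of_isUnit_mixedJacobian_const {x : ι → ℝ}
    (h : IsUnit (mixedJacobian f' fun _ => x)) : (f' x).IsInvertible := by
  rw [mixedJacobian_const, Matrix.isUnit_iff_isUnit_det, LinearMap.det_toMatrix'] at h
  exact ⟨(f' x).toContinuousLinearEquivOfDetNeZero h.ne_zero, by simp⟩

theorem Convex.exists_mixedJacobian_mulVec_eq {f : (ι → ℝ) → ι → ℝ} {s : Set (ι → ℝ)}
    (hs : Convex ℝ s) (hf : ∀ x ∈ s, HasFDerivWithinAt f (f' x) s x) {x y : ι → ℝ}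
    (hx : x ∈ s) (hy : y ∈ s) :
    ∃ χ : ι → ι → ℝ, (∀ i, χ i ∈ s) ∧ f y - f x = mixedJacobian f' χ *ᵥ (y - x) := by
  have hrow : ∀ i, ∃ z ∈ s, f y i - f x i = f' z (y - x) i := fun i => by
    obtain ⟨z, hz, h⟩ := domain_mvt (f := fun x => f x i)
      (fun x hx => hasFDerivWithinAt_pi'.1 (hf x hx) i) hs hx hy
    exact ⟨z, hs.segment_subset hx hy hz, h⟩
  choose χ hχs hχ using hrow
  exact ⟨χ, hχs, funext fun i => by rw [mixedJacobian_mulVec_apply]; exact hχ i⟩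

end MixedJacobian

theorem IsCompact.exists_pos_mul_norm_le_norm_mulVec {X ι : Type*} [TopologicalSpace X]
    [Fintype ι] [DecidableEq ι] {K : Set X} (hK : IsCompact K) {A : X → Matrix ι ι ℝ}
    (hA : ContinuousOn A K) (hunit : ∀ x ∈ K, IsUnit (A x)) :
    ∃ c > 0, ∀ x ∈ K, ∀ w, c * ‖w‖ ≤ ‖A x *ᵥ w‖ := by
  set S := K ×ˢ Metric.sphere (0 : ι → ℝ) 1
  have hcont : ContinuousOn (fun p : X × (ι → ℝ) => ‖A p.1 *ᵥ p.2‖) S :=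
    (continuous_fst.matrix_mulVec continuous_snd).norm.comp_continuousOn
      ((hA.comp continuousOn_fst fun _ hp => hp.1).prodMk continuousOn_snd)
  have hpos : ∀ p ∈ S, 0 < ‖A p.1 *ᵥ p.2‖ := fun p hp => by
    refine norm_pos_iff.2 fun h => ?_
    have : p.2 = 0 :=
      Matrix.mulVec_injective_iff_isUnit.2 (hunit _ hp.1) (by rw [h, Matrix.mulVec_zero])
    simpa [this] using hp.2
  obtain ⟨c, hc, hmin⟩ := (hK.prod (isCompact_sphere _ _)).exists_forall_le' hcont hpos
  refine ⟨c, hc, fun x hx w => ?_⟩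
  rcases eq_or_ne w 0 with rfl | hw
  · simp
  have hw' : 0 < ‖w‖ := norm_pos_iff.2 hw
  have := hmin (x, ‖w‖⁻¹ • w) ⟨hx, by simp [norm_smul, hw]⟩
  rw [Matrix.mulVec_smul, norm_smul, norm_inv, norm_norm, le_inv_mul_iff₀ hw'] at this
  linarith

theorem Convex.exists_pos_mul_dist_le_dist_of_mixedJacobian {ι : Type*} [Fintype ι]
    [DecidableEq ι] {f : (ι → ℝ) → ι → ℝ} {f' : (ι → ℝ) → (ι → ℝ) →L[ℝ] (ι → ℝ)}
    {s : Set (ι → ℝ)} (hs : Convex ℝ s) (hsc : IsCompact s)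
    (hf : ∀ x ∈ s, HasFDerivWithinAt f (f' x) s x) (hf' : ContinuousOn f' s)
    (hM : ∀ χ : ι → ι → ℝ, (∀ i, χ i ∈ s) → IsUnit (mixedJacobian f' χ)) :
    ∃ c > 0, ∀ x ∈ s, ∀ y ∈ s, c * dist x y ≤ dist (f x) (f y) := by
  obtain ⟨c, hc, hbound⟩ := (isCompact_univ_pi fun _ => hsc).exists_pos_mul_norm_le_norm_mulVec
    hf'.mixedJacobian fun χ hχ => hM χ fun i => hχ i (mem_univ i)
  refine ⟨c, hc, fun x hx y hy => ?_⟩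
  obtain ⟨χ, hχs, hχ⟩ := hs.exists_mixedJacobian_mulVec_eq hf hy hx
  rw [dist_eq_norm, dist_eq_norm, hχ]
  exact hbound χ (fun i _ => hχs i) (x - y)

section LowerLipschitz

variable {α β : Type*} [MetricSpace α] [PseudoMetricSpace β] {f : α → β} {s : Set α} {c : ℝ}

theorem Set.InjOn.of_mul_dist_le (hc : 0 < c)
    (h : ∀ x ∈ s, ∀ y ∈ s, c * dist x y ≤ dist (f x) (f y)) : InjOn f s := fun x hx y hy hxy => by
  have := h x hx y hy
  rw [hxy, dist_self] at this
  exact dist_le_zero.1 (nonpos_of_mul_nonpos_right this hc)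

theorem lipschitzOnWith_invFunOn_of_mul_dist_le [Nonempty α] (hc : 0 < c)
    (h : ∀ x ∈ s, ∀ y ∈ s, c * dist x y ≤ dist (f x) (f y)) :
    LipschitzOnWith (Real.toNNReal c⁻¹) (invFunOn f s) (f '' s) := by
  refine LipschitzOnWith.of_dist_le_mul ?_
  rintro _ ⟨x, hx, rfl⟩ _ ⟨y, hy, rfl⟩
  have hinj := InjOn.of_mul_dist_le hc h
  rw [hinj.leftInvOn_invFunOn hx, hinj.leftInvOn_invFunOn hy, Real.coe_toNNReal _ (by positivity),
    ← div_eq_inv_mul, le_div_iff₀' hc]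
  exact h x hx y hy

end LowerLipschitz

theorem contDiffOn_one_of_local_left_inverse {𝕜 E F : Type*} [NontriviallyNormedField 𝕜]
    [NormedAddCommGroup E] [NormedSpace 𝕜 E] [CompleteSpace E]
    [NormedAddCommGroup F] [NormedSpace 𝕜 F]
    {f : E → F} {f' : E → E →L[𝕜] F} {s : Set E} {g : F → E} {t : Set F}
    (hf : ∀ x ∈ s, HasFDerivWithinAt f (f' x) s x) (hf' : ContinuousOn f' s)
    (hinv : ∀ x ∈ s, (f' x).IsInvertible) (hg : ContinuousOn g t) (hgs : MapsTo g t s)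
    (hfg : LeftInvOn f g t) : ContDiffOn 𝕜 1 g t := by
  have hderiv : ∀ y ∈ t, HasFDerivWithinAt g ((f' (g y)).inverse) t y := fun y hy => by
    obtain ⟨e, he⟩ := hinv (g y) (hgs hy)
    rw [← he, ContinuousLinearMap.inverse_equiv]
    exact HasFDerivWithinAt.of_local_left_inverse ((hg y hy).tendsto_nhdsWithin hgs)
      (he ▸ hf (g y) (hgs hy)) hy (eventually_nhdsWithin_of_forall hfg)
  have hcont : ContinuousOn (fun y => (f' (g y)).inverse) t := fun y hy =>
    ((hinv (g y) (hgs hy)).contDiffAt_map_inverse (n := 0)).continuousAt.comp_continuousWithinAt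
      (f := f' ∘ g) ((hf' (g y) (hgs hy)).comp (hg y hy) hgs)
  rw [show (1 : WithTop ℕ∞) = 0 + 1 from rfl, contDiffOn_succ_iff_hasFDerivWithinAt (by simp)]
  refine fun y hy => ⟨t, ?_, by simp, _, hderiv, contDiffOn_zero.2 hcont⟩
  rw [insert_eq_of_mem hy]
  exact self_mem_nhdsWithin

theorem invertibility_from_first_derivatives_general
    (v : ℕ) (a b : Fin v → ℝ)
    (B : Set (Fin v → ℝ)) (hB : B = Set.univ.pi fun i => Set.Icc (a i) (b i))
    (f : (Fin v → ℝ) → Fin v → ℝ)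
    (f' : (Fin v → ℝ) → (Fin v → ℝ) →L[ℝ] (Fin v → ℝ))
    (hdiff : ∀ x ∈ B, HasFDerivWithinAt f (f' x) B x)
    (hcont : ContinuousOn f' B)
    (hM : ∀ χ : Fin v → (Fin v → ℝ), (∀ i, χ i ∈ B) →
      IsUnit (Matrix.of fun i j => f' (χ i) (Pi.single j 1) i)) :
    Set.InjOn f B ∧
      ∃ g : (Fin v → ℝ) → Fin v → ℝ,
        ContDiffOn ℝ 1 g (f '' B) ∧
        (∀ x ∈ B, g (f x) = x) ∧
        (∀ y ∈ f '' B, f (g y) = y) := by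
  have hBconv : Convex ℝ B := hB ▸ convex_pi fun i _ => convex_Icc (a i) (b i)
  have hBcpt : IsCompact B := hB ▸ isCompact_univ_pi fun i => isCompact_Icc
  obtain ⟨c, hc, hdist⟩ := hBconv.exists_pos_mul_dist_le_dist_of_mixedJacobian hBcpt hdiff hcont hM
  have hinj : InjOn f B := .of_mul_dist_le hc hdist
  have hfg : LeftInvOn f (invFunOn f B) (f '' B) := fun y hy => invFunOn_eq hy
  refine ⟨hinj, invFunOn f B, ?_, fun x hx => hinj.leftInvOn_invFunOn hx, hfg⟩
  exact contDiffOn_one_of_local_left_inverse hdiff hcont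
    (fun x hx => .of_isUnit_mixedJacobian_const (hM _ fun _ => hx))
    (lipschitzOnWith_invFunOn_of_mul_dist_le hc hdist).continuousOn (fun y hy => invFunOn_mem hy)
    hfg

/-- **Invertibility from first derivatives on a box.**
If `f` is C¹ on a nonempty box `B ⊆ ℝ^v` and every "mixed-point Jacobian"
(the matrix whose `i`-th row is the gradient of `fᵢ` at its own point `χ i ∈ B`)
is invertible, then `f` is injective on `B` and admits a C¹ inverse on `f(B)`. -/
theorem invertibility_from_first_derivatives
    (v : ℕ) (hv : 1 ≤ v) (a b : Fin v → ℝ) (hab : ∀ i, a i ≤ b i)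
    (B : Set (Fin v → ℝ)) (hB : B = Set.univ.pi fun i => Set.Icc (a i) (b i))
    (f : (Fin v → ℝ) → Fin v → ℝ)
    (f' : (Fin v → ℝ) → (Fin v → ℝ) →L[ℝ] (Fin v → ℝ))
    (hdiff : ∀ x ∈ B, HasFDerivWithinAt f (f' x) B x)
    (hcont : ContinuousOn f' B)
    (hM : ∀ χ : Fin v → (Fin v → ℝ), (∀ i, χ i ∈ B) →
      IsUnit (Matrix.of fun i j => f' (χ i) (Pi.single j 1) i)) :
    Set.InjOn f B ∧
      ∃ g : (Fin v → ℝ) → Fin v → ℝ,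
        ContDiffOn ℝ 1 g (f '' B) ∧
        (∀ x ∈ B, g (f x) = x) ∧
        (∀ y ∈ f '' B, f (g y) = y) :=
  invertibility_from_first_derivatives_general v a b B hB f f' hdiff hcont hM
end

section
/- Let n ≥ 1 and let A, B, C, D, N be real 2n×2n matrices such that the 4n×4n block matrix G = [[A, B], [C, D]] satisfies the conformal symplectic condition Gᵀ J_{4n} G = μ J̃_{4n} for some nonzero real constant μ, where J̃_{4n} = [[J_{2n}, 0], [0, −J_{2n}]]. Assume N is symmetric and that the matrix NC − A is invertible. Then the matrix M = (NC − A)⁻¹ (B − ND) is symplectic, i.e., Mᵀ J_{2n} M = J_{2n}. -/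
open Matrix

/-- If the block matrix `G = [[A,B],[C,D]]` is conformal symplectic
(`Gᵀ J₄ₙ G = μ J̃₄ₙ`, `μ ≠ 0`), `N` is symmetric and `NC - A` is invertible,
then `M = (NC - A)⁻¹ (B - N D)` is symplectic: `Mᵀ J₂ₙ M = J₂ₙ`. -/
theorem symplectic_of_generating
    (n : ℕ) (hn : 1 ≤ n)
    (A B C D N : Matrix (Fin n ⊕ Fin n) (Fin n ⊕ Fin n) ℝ)
    (μ : ℝ) (hμ : μ ≠ 0)
    (J : Matrix (Fin n ⊕ Fin n) (Fin n ⊕ Fin n) ℝ)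
    (hJ : J = Matrix.fromBlocks 0 1 (-1) 0)
    (hG : (Matrix.fromBlocks A B C D)ᵀ * Matrix.fromBlocks 0 1 (-1) 0 *
        Matrix.fromBlocks A B C D = μ • Matrix.fromBlocks J 0 0 (-J))
    (hN : Nᵀ = N)
    (hinv : IsUnit (N * C - A)) :
    ((N * C - A)⁻¹ * (B - N * D))ᵀ * J * ((N * C - A)⁻¹ * (B - N * D)) = J := by
  have hJJ : J * J = -1 := by
    subst hJ
    rw [show (-1 : Matrix (Fin n ⊕ Fin n) (Fin n ⊕ Fin n) ℝ) =
        Matrix.fromBlocks (-1) 0 0 (-1) by simp [← Matrix.fromBlocks_one, Matrix.fromBlocks_neg]]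
    simp [Matrix.fromBlocks_multiply]
  -- abbreviations
  set G := Matrix.fromBlocks A B C D with hGdef
  set J4 := (Matrix.fromBlocks 0 1 (-1) 0 :
      Matrix ((Fin n ⊕ Fin n) ⊕ (Fin n ⊕ Fin n)) ((Fin n ⊕ Fin n) ⊕ (Fin n ⊕ Fin n)) ℝ)
    with hJ4def
  set Jt := Matrix.fromBlocks J 0 0 (-J) with hJtdef
  have hJ4J4 : J4 * J4 = -1 := by
    rw [hJ4def, show (-1 : Matrix ((Fin n ⊕ Fin n) ⊕ (Fin n ⊕ Fin n)) _ ℝ) =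
        Matrix.fromBlocks (-1) 0 0 (-1) by simp [← Matrix.fromBlocks_one, Matrix.fromBlocks_neg]]
    simp [Matrix.fromBlocks_multiply]
  have hJtJt : Jt * Jt = -1 := by
    rw [hJtdef, show (-1 : Matrix ((Fin n ⊕ Fin n) ⊕ (Fin n ⊕ Fin n)) _ ℝ) =
        Matrix.fromBlocks (-1) 0 0 (-1) by simp [← Matrix.fromBlocks_one, Matrix.fromBlocks_neg]]
    simp [Matrix.fromBlocks_multiply, hJJ]
  -- G has a left inverse, hence a two-sided inverse
  have hL : (μ⁻¹ • ((-Jt) * Gᵀ * J4)) * G = 1 := by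
    have : (-Jt) * (Gᵀ * J4 * G) = μ • 1 := by
      rw [hG]
      rw [Matrix.mul_smul, neg_mul, hJtJt]
      simp
    calc (μ⁻¹ • ((-Jt) * Gᵀ * J4)) * G
        = μ⁻¹ • ((-Jt) * (Gᵀ * J4 * G)) := by
          simp only [Matrix.smul_mul, Matrix.mul_assoc]
      _ = 1 := by rw [this, smul_smul, inv_mul_cancel₀ hμ, one_smul]
  have hR : G * (μ⁻¹ • ((-Jt) * Gᵀ * J4)) = 1 := by
    rw [mul_eq_one_comm]; exact hL
  -- G Jt Gᵀ = μ • J4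
  have hGJt : G * Jt * Gᵀ = μ • J4 := by
    have h1 : G * ((-Jt) * Gᵀ * J4) = μ • 1 := by
      have := congrArg (fun X => (μ : ℝ) • X) hR
      simpa [smul_smul, mul_inv_cancel₀ hμ, Matrix.mul_smul] using this
    have h2 : G * ((-Jt) * Gᵀ * J4) * (-J4) = (μ • 1) * (-J4) := by rw [h1]
    calc G * Jt * Gᵀ = -(G * ((-Jt) * Gᵀ * J4) * (-J4)) := by
          simp only [Matrix.mul_assoc, Matrix.neg_mul, Matrix.mul_neg, neg_neg]
          rw [hJ4J4]
          simp [Matrix.mul_assoc]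
      _ = -((μ • 1) * (-J4)) := by rw [h2]
      _ = μ • J4 := by simp [Matrix.smul_mul]
  -- extract blocks
  have hblocks : Matrix.fromBlocks
      (A * J * Aᵀ + B * (-J) * Bᵀ) (A * J * Cᵀ + B * (-J) * Dᵀ)
      (C * J * Aᵀ + D * (-J) * Bᵀ) (C * J * Cᵀ + D * (-J) * Dᵀ) =
      Matrix.fromBlocks 0 (μ • 1) (-(μ • 1)) 0 := by
    have := hGJt
    rw [hGdef, hJtdef, hJ4def, Matrix.fromBlocks_transpose, Matrix.fromBlocks_multiply,
      Matrix.fromBlocks_multiply, Matrix.fromBlocks_smul] at this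
    simpa [Matrix.mul_assoc] using this
  have e1 : B * J * Bᵀ = A * J * Aᵀ := by
    have h := congrArg Matrix.toBlocks₁₁ hblocks
    simp only [Matrix.toBlocks_fromBlocks₁₁, Matrix.mul_neg, Matrix.neg_mul,
      ← sub_eq_add_neg] at h
    exact (sub_eq_zero.mp h).symm
  have e2 : D * J * Dᵀ = C * J * Cᵀ := by
    have h := congrArg Matrix.toBlocks₂₂ hblocks
    simp only [Matrix.toBlocks_fromBlocks₂₂, Matrix.mul_neg, Matrix.neg_mul,
      ← sub_eq_add_neg] at h
    exact (sub_eq_zero.mp h).symm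
  have e3 : A * J * Cᵀ - B * J * Dᵀ = μ • 1 := by
    have h := congrArg Matrix.toBlocks₁₂ hblocks
    simpa only [Matrix.toBlocks_fromBlocks₁₂, Matrix.mul_neg, Matrix.neg_mul,
      ← sub_eq_add_neg] using h
  have e4 : C * J * Aᵀ - D * J * Bᵀ = -(μ • 1) := by
    have h := congrArg Matrix.toBlocks₂₁ hblocks
    simpa only [Matrix.toBlocks_fromBlocks₂₁, Matrix.mul_neg, Matrix.neg_mul,
      ← sub_eq_add_neg] using h
  -- key identity
  have key : (B - N * D) * J * (B - N * D)ᵀ = (N * C - A) * J * (N * C - A)ᵀ := by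
    have expand : (B - N * D) * J * (B - N * D)ᵀ - (N * C - A) * J * (N * C - A)ᵀ =
        (B * J * Bᵀ - A * J * Aᵀ) + N * (D * J * Dᵀ - C * J * Cᵀ) * N +
          N * (C * J * Aᵀ - D * J * Bᵀ) + (A * J * Cᵀ - B * J * Dᵀ) * N := by
      simp only [Matrix.transpose_sub, Matrix.transpose_mul, hN]
      noncomm_ring
    have : (B - N * D) * J * (B - N * D)ᵀ - (N * C - A) * J * (N * C - A)ᵀ = 0 := by
      rw [expand, e1, e2, e3, e4]
      simp [Matrix.mul_smul, Matrix.smul_mul]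
    exact sub_eq_zero.mp this
  -- M J Mᵀ = J
  set K := N * C - A with hKdef
  have hdet : IsUnit K.det := (Matrix.isUnit_iff_isUnit_det K).mp hinv
  have hKinv : K⁻¹ * K = 1 := Matrix.nonsing_inv_mul K hdet
  have hKTinv : Kᵀ * (Kᵀ)⁻¹ = 1 :=
    Matrix.mul_nonsing_inv _ (by rwa [Matrix.det_transpose])
  set M := K⁻¹ * (B - N * D) with hMdef
  have hMT : Mᵀ = (B - N * D)ᵀ * (Kᵀ)⁻¹ := by
    rw [hMdef, Matrix.transpose_mul, Matrix.transpose_nonsing_inv]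
  have hMJMT : M * J * Mᵀ = J := by
    rw [hMdef, hMT]
    calc K⁻¹ * (B - N * D) * J * ((B - N * D)ᵀ * (Kᵀ)⁻¹)
        = K⁻¹ * ((B - N * D) * J * (B - N * D)ᵀ) * (Kᵀ)⁻¹ := by
          simp only [Matrix.mul_assoc]
      _ = K⁻¹ * (K * J * Kᵀ) * (Kᵀ)⁻¹ := by rw [key]
      _ = (K⁻¹ * K) * J * (Kᵀ * (Kᵀ)⁻¹) := by simp only [Matrix.mul_assoc]
      _ = J := by rw [hKinv, hKTinv]; simp
  have hMright : M * (J * Mᵀ * (-J)) = 1 := by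
    calc M * (J * Mᵀ * (-J)) = (M * J * Mᵀ) * (-J) := by
          simp only [Matrix.mul_assoc]
      _ = J * (-J) := by rw [hMJMT]
      _ = 1 := by rw [Matrix.mul_neg, hJJ]; simp
  have hMleft : (J * Mᵀ * (-J)) * M = 1 := by
    rw [mul_eq_one_comm]; exact hMright
  have hfin : Mᵀ * J * M = J := by
    have h2 : (-J) * ((J * Mᵀ * (-J)) * M) = (-J) * 1 := by rw [hMleft]
    have h3 : Mᵀ * (-J) * M = -J := by
      calc Mᵀ * (-J) * M = ((-J) * J) * (Mᵀ * (-J) * M) := by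
            rw [Matrix.neg_mul, hJJ]; simp
        _ = (-J) * ((J * Mᵀ * (-J)) * M) := by simp only [Matrix.mul_assoc]
        _ = (-J) * 1 := h2
        _ = -J := by simp
    have := congrArg Neg.neg h3
    simpa [Matrix.mul_neg, Matrix.neg_mul] using this
  exact hfin
end

section
/- Let n ≥ 1 and let A, B, C, D be real 2n×2n matrices such that the 4n×4n block matrix G = [[A, B], [C, D]] satisfies the conformal symplectic condition Gᵀ J_{4n} G = μ J̃_{4n} for some nonzero real constant μ. Let M be a 2n×2n symplectic matrix (Mᵀ J_{2n} M = J_{2n}) and assume CM + D is invertible. Then the matrix N = (AM + B)(CM + D)⁻¹ is symmetric. -/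
/-!
Write `L = AM + B` and `K = CM + D`. The block entries of `Gᵀ J₄ₙ G = μ J̃₄ₙ` say that
`AᵀC - CᵀA = μJ`, `BᵀD - DᵀB = -μJ` and that the off-diagonal combinations vanish; expanding
`LᵀK - KᵀL` in these terms leaves `Mᵀ(μJ)M - μJ`, which is zero because `M` is symplectic.
So `LᵀK` is symmetric, and then so is `LK⁻¹ = K⁻ᵀ (LᵀK)ᵀ K⁻¹`.
-/

open Matrix

namespace Matrix

variable {l m n R : Type*} [CommRing R]

theorem fromBlocks_transpose_mul_symplectic_mul [Fintype l] [DecidableEq l] [Fintype m]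
    [Fintype n] (A : Matrix l m R) (B : Matrix l n R) (C : Matrix l m R) (D : Matrix l n R) :
    (fromBlocks A B C D)ᵀ * (fromBlocks 0 1 (-1) 0 : Matrix (l ⊕ l) (l ⊕ l) R) *
        fromBlocks A B C D =
      fromBlocks (Aᵀ * C - Cᵀ * A) (Aᵀ * D - Cᵀ * B) (Bᵀ * C - Dᵀ * A) (Bᵀ * D - Dᵀ * B) := by
  simp only [fromBlocks_transpose, fromBlocks_multiply, Matrix.mul_zero, Matrix.mul_one,
    Matrix.mul_neg, Matrix.neg_mul, zero_add, add_zero, neg_add_eq_sub]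

theorem transpose_mul_sub_transpose_mul_of_affine [Fintype l] [Fintype m]
    (A B C D : Matrix l m R) (M : Matrix m m R) :
    (A * M + B)ᵀ * (C * M + D) - (C * M + D)ᵀ * (A * M + B) =
      Mᵀ * (Aᵀ * C - Cᵀ * A) * M + Mᵀ * (Aᵀ * D - Cᵀ * B) + (Bᵀ * C - Dᵀ * A) * M +
        (Bᵀ * D - Dᵀ * B) := by
  simp only [transpose_add, transpose_mul, Matrix.add_mul, Matrix.mul_add, Matrix.mul_sub,
    Matrix.sub_mul, Matrix.mul_assoc]
  abel

theorem isSymm_mul_nonsing_inv_of_isSymm_transpose_mul [Fintype m] [DecidableEq m]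
    {L K : Matrix m m R} (hK : IsUnit K) (h : (Lᵀ * K).IsSymm) : (L * K⁻¹).IsSymm := by
  have hKdet : IsUnit K.det := (isUnit_iff_isUnit_det K).mp hK
  have hKTdet : IsUnit Kᵀ.det := by rwa [det_transpose]
  have hLT : Lᵀ = Kᵀ * L * K⁻¹ := by
    rw [← transpose_transpose (Kᵀ * L), transpose_mul, transpose_transpose, h.eq,
      Matrix.mul_assoc, mul_nonsing_inv K hKdet, Matrix.mul_one]
  rw [IsSymm, transpose_mul, transpose_nonsing_inv, hLT, Matrix.mul_assoc, ← Matrix.mul_assoc,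
    nonsing_inv_mul Kᵀ hKTdet, Matrix.one_mul]

end Matrix

theorem symmetric_of_symplectic_general
    (n : ℕ)
    (A B C D M : Matrix (Fin n ⊕ Fin n) (Fin n ⊕ Fin n) ℝ)
    (μ : ℝ)
    (J : Matrix (Fin n ⊕ Fin n) (Fin n ⊕ Fin n) ℝ)
    (hG : (Matrix.fromBlocks A B C D)ᵀ * Matrix.fromBlocks 0 1 (-1) 0 *
        Matrix.fromBlocks A B C D = μ • Matrix.fromBlocks J 0 0 (-J))
    (hM : Mᵀ * J * M = J)
    (hinv : IsUnit (C * M + D)) :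
    ((A * M + B) * (C * M + D)⁻¹)ᵀ = (A * M + B) * (C * M + D)⁻¹ := by
  rw [fromBlocks_transpose_mul_symplectic_mul, fromBlocks_smul, fromBlocks_inj] at hG
  obtain ⟨hAC, hAD, hBC, hBD⟩ := hG
  refine isSymm_mul_nonsing_inv_of_isSymm_transpose_mul hinv ?_
  rw [IsSymm, transpose_mul, transpose_transpose]
  refine (sub_eq_zero.mp ?_).symm
  rw [transpose_mul_sub_transpose_mul_of_affine, hAC, hAD, hBC, hBD]
  simp only [Matrix.mul_smul, Matrix.smul_mul, hM, smul_zero, Matrix.zero_mul,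
    Matrix.mul_zero, add_zero, smul_neg, add_neg_cancel]

/-- If the block matrix `G = [[A,B],[C,D]]` is conformal symplectic
(`Gᵀ J₄ₙ G = μ J̃₄ₙ`, `μ ≠ 0`), `M` is symplectic and `CM + D` is invertible,
then `N = (AM + B)(CM + D)⁻¹` is symmetric. -/
theorem symmetric_of_symplectic
    (n : ℕ) (hn : 1 ≤ n)
    (A B C D M : Matrix (Fin n ⊕ Fin n) (Fin n ⊕ Fin n) ℝ)
    (μ : ℝ) (hμ : μ ≠ 0)
    (J : Matrix (Fin n ⊕ Fin n) (Fin n ⊕ Fin n) ℝ)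
    (hJ : J = Matrix.fromBlocks 0 1 (-1) 0)
    (hG : (Matrix.fromBlocks A B C D)ᵀ * Matrix.fromBlocks 0 1 (-1) 0 *
        Matrix.fromBlocks A B C D = μ • Matrix.fromBlocks J 0 0 (-J))
    (hM : Mᵀ * J * M = J)
    (hinv : IsUnit (C * M + D)) :
    ((A * M + B) * (C * M + D)⁻¹)ᵀ = (A * M + B) * (C * M + D)⁻¹ :=
  symmetric_of_symplectic_general n A B C D M μ J hG hM hinv
end

section
/- Let n ≥ 1, let ℳ : ℝ^{2n} → ℝ^{2n} be a twice continuously differentiable symplectic map (its Jacobian M(x) satisfies M(x)ᵀ J_{2n} M(x) = J_{2n} at every point x), and let α = (α₁, α₂)ᵀ : ℝ^{4n} → ℝ^{4n} be a continuously differentiable conformal symplectic map, whose Jacobian is written in 2n×2n blocks as [[A, B], [C, D]]. Let z ∈ ℝ^{2n} be a point such that det( C(ℳ(z), z) · M(z) + D(ℳ(z), z) ) ≠ 0, where M(z) is the Jacobian of ℳ at z. Then there is an open neighborhood U of z such that the map g := α₂ ∘ (ℳ, Id), i.e., g(x) = α₂(ℳ(x), x), is a C¹ diffeomorphism from U onto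 its image g(U), and there exists a continuously differentiable function F : g(U) → ℝ whose gradient satisfies (∇F)ᵀ = (α₁ ∘ (ℳ, Id)) ∘ (α₂ ∘ (ℳ, Id))⁻¹ on g(U). -/
/-!
Write `g = α₂ ∘ (ℳ, Id)` and `p = α₁ ∘ (ℳ, Id)`. The columns of the Jacobian `[M; 1]` of
`x ↦ (ℳ x, x)` span a subspace on which the form `J ⊕ (-J)` vanishes, because `ℳ` is symplectic;
since `α` is conformal symplectic, the Jacobian `[Dp; Dg]` of `α ∘ (ℳ, Id)` spans a subspace on
which the standard form vanishes, i.e. `Dpᵀ Dg = Dgᵀ Dp`. Where `Dg` is invertible, the inverse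
function theorem makes `g` a `C¹` diffeomorphism from a neighbourhood of `z` onto a ball, and the
Jacobian `Dp Dg⁻¹` of `p ∘ g⁻¹` is then symmetric. The Poincaré lemma on the ball produces `F`.
-/

open Matrix Set Metric

section MatrixAlgebra

variable {m n R : Type*} [Fintype m] [CommRing R]

theorem transpose_fromRows_mul_fromBlocks_mul_fromRows (A B : Matrix m n R)
    (P Q S T : Matrix m m R) :
    (fromRows A B)ᵀ * fromBlocks P Q S T * fromRows A B =
      Aᵀ * P * A + Aᵀ * Q * B + Bᵀ * S * A + Bᵀ * T * B := by
  simp only [transpose_fromRows, fromCols_mul_fromBlocks, fromCols_mul_fromRows, Matrix.add_mul]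
  abel

variable [DecidableEq m]

theorem transpose_mul_eq_of_conformal_mul_graph {X : Matrix (m ⊕ m) (m ⊕ m) R} {μ : R}
    {J K N Q : Matrix m m R}
    (hX : Xᵀ * fromBlocks 0 1 (-1) 0 * X = μ • fromBlocks J 0 0 (-J))
    (hK : Kᵀ * J * K = J) (hXK : X * fromRows K (1 : Matrix m m R) = fromRows N Q) :
    Nᵀ * Q = Qᵀ * N := by
  set G : Matrix (m ⊕ m) m R := fromRows K 1
  set S : Matrix (m ⊕ m) (m ⊕ m) R := fromBlocks 0 1 (-1) 0
  have hgraph : Gᵀ * fromBlocks J 0 0 (-J) * G = 0 := by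
    rw [transpose_fromRows_mul_fromBlocks_mul_fromRows, hK]
    simp
  have hisotropic : (fromRows N Q)ᵀ * S * fromRows N Q = 0 :=
    calc (fromRows N Q)ᵀ * S * fromRows N Q = Gᵀ * (Xᵀ * S * X) * G := by
          simp only [← hXK, transpose_mul, Matrix.mul_assoc]
      _ = μ • (Gᵀ * fromBlocks J 0 0 (-J) * G) := by
          rw [hX, Matrix.mul_smul, Matrix.smul_mul]
      _ = 0 := by rw [hgraph, smul_zero]
  rw [transpose_fromRows_mul_fromBlocks_mul_fromRows] at hisotropic
  simpa [sub_eq_zero, ← sub_eq_add_neg] using hisotropic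

theorem transpose_eq_of_transpose_mul_comm {P Q : Matrix m m R} (hQ : IsUnit Q)
    (h : (P * Q)ᵀ * Q = Qᵀ * (P * Q)) : Pᵀ = P := by
  rw [transpose_mul, Matrix.mul_assoc] at h
  exact hQ.mul_right_cancel ((isUnit_transpose Q).2 hQ |>.mul_left_cancel h)

end MatrixAlgebra

theorem ContDiff.sumElim_self {ι κ : Type*} [Fintype ι] [Fintype κ] {k : WithTop ℕ∞}
    {M : (ι → ℝ) → κ → ℝ} (hM : ContDiff ℝ k M) : ContDiff ℝ k (fun y => Sum.elim (M y) y) :=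
  contDiff_pi.2 fun
    | .inl i => contDiff_pi.1 hM i
    | .inr i => contDiff_pi.1 contDiff_id i

theorem DifferentiableAt.sumElim_self {ι κ : Type*} [Fintype ι] [Fintype κ] {M : (ι → ℝ) → κ → ℝ}
    {x : ι → ℝ} (hM : DifferentiableAt ℝ M x) :
    DifferentiableAt ℝ (fun y => Sum.elim (M y) y) x :=
  differentiableAt_pi.2 fun
    | .inl i => differentiableAt_pi.1 hM i
    | .inr i => differentiableAt_pi.1 differentiableAt_id i

section Jacobian

variable {ι κ ν : Type*} [DecidableEq ι] {x : ι → ℝ}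

noncomputable def jacobian (f : (ι → ℝ) → κ → ℝ) (x : ι → ℝ) : Matrix κ ι ℝ :=
  Matrix.of fun i j => fderiv ℝ (fun y => f y i) x (Pi.single j 1)

theorem Filter.EventuallyEq.jacobian_eq {f g : (ι → ℝ) → κ → ℝ} (h : f =ᶠ[nhds x] g) :
    jacobian f x = jacobian g x := by
  ext i j
  simp only [jacobian, of_apply]
  rw [Filter.EventuallyEq.fderiv_eq (h.mono fun y hy => congrFun hy i)]

theorem jacobian_sumElim_self {f : (ι → ℝ) → κ → ℝ} :
    jacobian (fun y => Sum.elim (f y) y) x = fromRows (jacobian f x) 1 := by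
  ext (i | i) j
  · rfl
  · simp [jacobian, (hasFDerivAt_apply i x).fderiv, Pi.single_apply, one_apply]

variable [Fintype ι]

theorem jacobian_eq_toMatrix' [Fintype κ] {f : (ι → ℝ) → κ → ℝ} (hf : DifferentiableAt ℝ f x) :
    jacobian f x = LinearMap.toMatrix' (fderiv ℝ f x : (ι → ℝ) →ₗ[ℝ] κ → ℝ) := by
  ext i j
  simp [jacobian, fderiv_apply hf, LinearMap.toMatrix'_apply]

theorem fderiv_apply_eq_jacobian_mulVec [Fintype κ] {f : (ι → ℝ) → κ → ℝ}
    (hf : DifferentiableAt ℝ f x) (v : ι → ℝ) : fderiv ℝ f x v = jacobian f x *ᵥ v := by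
  rw [jacobian_eq_toMatrix' hf, LinearMap.toMatrix'_mulVec]
  rfl

theorem jacobian_comp [Fintype κ] [DecidableEq κ] [Fintype ν] {g : (κ → ℝ) → ν → ℝ}
    {f : (ι → ℝ) → κ → ℝ} (hg : DifferentiableAt ℝ g (f x)) (hf : DifferentiableAt ℝ f x) :
    jacobian (g ∘ f) x = jacobian g (f x) * jacobian f x := by
  classical
  rw [jacobian_eq_toMatrix' (hg.comp x hf), jacobian_eq_toMatrix' hg, jacobian_eq_toMatrix' hf,
    fderiv_comp x hg hf, ← LinearMap.toMatrix'_comp]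
  rfl

theorem isInvertible_fderiv_iff_isUnit_jacobian {f : (ι → ℝ) → ι → ℝ}
    (hf : DifferentiableAt ℝ f x) : (fderiv ℝ f x).IsInvertible ↔ IsUnit (jacobian f x) := by
  rw [jacobian_eq_toMatrix' hf, isUnit_iff_isUnit_det, LinearMap.det_toMatrix',
    ← LinearMap.isUnit_iff_isUnit_det, Module.End.isUnit_iff]
  constructor
  · rintro ⟨A, hA⟩
    exact hA ▸ A.bijective
  · intro h
    exact ⟨(LinearEquiv.ofBijective _ h).toContinuousLinearEquiv, rfl⟩

theorem fromRows_jacobian_comp_sumElim_self {ν₁ ν₂ : Type*} [Fintype κ] [DecidableEq κ]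
    [Fintype ν₁] [Fintype ν₂] {α : ((κ ⊕ ι) → ℝ) → (ν₁ ⊕ ν₂) → ℝ} {M : (ι → ℝ) → κ → ℝ}
    (hα : DifferentiableAt ℝ α (Sum.elim (M x) x)) (hM : DifferentiableAt ℝ M x) :
    fromRows (jacobian (fun y i => α (Sum.elim (M y) y) (Sum.inl i)) x)
        (jacobian (fun y i => α (Sum.elim (M y) y) (Sum.inr i)) x) =
      jacobian α (Sum.elim (M x) x) * fromRows (jacobian M x) (1 : Matrix ι ι ℝ) := by
  rw [← jacobian_sumElim_self, ← jacobian_comp (f := fun y => Sum.elim (M y) y) hα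
    hM.sumElim_self]
  ext (i | i) j <;> rfl

theorem jacobian_comp_sumElim_self_inr {ν₁ ν₂ : Type*} [Fintype κ] [DecidableEq κ]
    [Fintype ν₁] [Fintype ν₂] {α : ((κ ⊕ ι) → ℝ) → (ν₁ ⊕ ν₂) → ℝ} {M : (ι → ℝ) → κ → ℝ}
    (hα : DifferentiableAt ℝ α (Sum.elim (M x) x)) (hM : DifferentiableAt ℝ M x) :
    jacobian (fun y i => α (Sum.elim (M y) y) (Sum.inr i)) x =
      (jacobian α (Sum.elim (M x) x)).toBlocks₂₁ * jacobian M x +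
        (jacobian α (Sum.elim (M x) x)).toBlocks₂₂ := by
  have h := fromRows_jacobian_comp_sumElim_self hα hM
  rw [← fromBlocks_toBlocks (jacobian α _), fromBlocks_mul_fromRows, fromRows_ext_iff] at h
  rw [h.2, Matrix.mul_one]

theorem jacobian_comp_mul_of_leftInvOn [Fintype κ] [DecidableEq κ] [Fintype ν]
    {g : (ι → ℝ) → κ → ℝ} {ginv : (κ → ℝ) → ι → ℝ} {p : (ι → ℝ) → ν → ℝ} {U : Set (ι → ℝ)}
    (hU : IsOpen U) (hleft : LeftInvOn ginv g U) (hx : x ∈ U)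
    (hp : DifferentiableAt ℝ (p ∘ ginv) (g x)) (hg : DifferentiableAt ℝ g x) :
    jacobian (p ∘ ginv) (g x) * jacobian g x = jacobian p x := by
  rw [← jacobian_comp hp hg]
  refine Filter.EventuallyEq.jacobian_eq ?_
  filter_upwards [hU.mem_nhds hx] with y hy
  simp [hleft hy]

end Jacobian

theorem ContDiff.exists_ball_leftInvOn {E F : Type*} [NormedAddCommGroup E] [NormedSpace ℝ E]
    [CompleteSpace E] [NormedAddCommGroup F] [NormedSpace ℝ F] {f : E → F}
    (hf : ContDiff ℝ 1 f) {z : E} (hz : (fderiv ℝ f z).IsInvertible) :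
    ∃ U : Set E, IsOpen U ∧ z ∈ U ∧ (∀ x ∈ U, (fderiv ℝ f x).IsInvertible) ∧
      ∃ r > 0, f '' U = ball (f z) r ∧
        ∃ finv : F → E, LeftInvOn finv f U ∧ ContDiffOn ℝ 1 finv (ball (f z) r) := by
  obtain ⟨f', hf'⟩ := hz
  have hderiv : ∀ x, HasFDerivAt f (fderiv ℝ f x) x :=
    fun x => (hf.differentiable one_ne_zero x).hasFDerivAt
  set e := hf.contDiffAt.toOpenPartialHomeomorph f (hf' ▸ hderiv z) one_ne_zero
  set U₁ := e.source ∩ {x | (fderiv ℝ f x).IsInvertible}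
  have hU₁ : IsOpen U₁ := e.open_source.inter
    (ContinuousLinearEquiv.isOpen.preimage (hf.continuous_fderiv one_ne_zero))
  have hzU₁ : z ∈ U₁ := ⟨hf.contDiffAt.mem_toOpenPartialHomeomorph_source _ _, f', hf'⟩
  obtain ⟨r, hr, hball⟩ := Metric.isOpen_iff.1
    (e.isOpen_image_of_subset_source hU₁ inter_subset_left) (f z) ⟨z, hzU₁, rfl⟩
  have himage : f '' (U₁ ∩ f ⁻¹' ball (f z) r) = ball (f z) r := by
    rw [image_inter_preimage]
    exact inter_eq_right.2 hball
  refine ⟨U₁ ∩ f ⁻¹' ball (f z) r, hU₁.inter (isOpen_ball.preimage hf.continuous),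
    ⟨hzU₁, mem_ball_self hr⟩, fun x hx => hx.1.2, r, hr, himage, e.symm,
    fun x hx => e.left_inv hx.1.1, ?_⟩
  rw [← himage]
  rintro _ ⟨x, ⟨⟨hxe, g', hg'⟩, -⟩, rfl⟩
  have hx : e.symm (e x) = x := e.left_inv hxe
  refine (e.contDiffAt_symm (e.map_source hxe) (f₀' := g') ?_ ?_).contDiffWithinAt
  · rw [hx, hg']
    exact hderiv x
  · rw [hx]
    exact hf.contDiffAt

theorem Convex.exists_potential_of_transpose_jacobian_eq {ι : Type*} [Fintype ι] [DecidableEq ι]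
    {s : Set (ι → ℝ)} (hs : Convex ℝ s) (hso : IsOpen s) {f : (ι → ℝ) → ι → ℝ}
    (hf : ContDiffOn ℝ 1 f s) (hsymm : ∀ y ∈ s, (jacobian f y)ᵀ = jacobian f y) :
    ∃ F : (ι → ℝ) → ℝ, ContDiffOn ℝ 1 F s ∧
      ∀ y ∈ s, ∀ i, fderiv ℝ F y (Pi.single i 1) = f y i := by
  -- `f` is viewed as the 1-form `y ↦ ⟪f y, ·⟫`, which is closed iff `jacobian f` is symmetric.
  let L : (ι → ℝ) →L[ℝ] (ι → ℝ) →L[ℝ] ℝ :=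
    ∑ i, (ContinuousLinearMap.proj i).smulRight (ContinuousLinearMap.proj i)
  have hL : ∀ u v, L u v = u ⬝ᵥ v := by
    intro u v
    simp [L, dotProduct]
  have hdiff : ∀ y ∈ s, DifferentiableAt ℝ f y :=
    fun y hy => (hf.contDiffAt (hso.mem_nhds hy)).differentiableAt one_ne_zero
  have hLf : ∀ y ∈ s, HasFDerivAt (fun y => L (f y)) (L.comp (fderiv ℝ f y)) y :=
    fun y hy => L.hasFDerivAt.comp y (hdiff y hy).hasFDerivAt
  obtain ⟨F, hF⟩ := hs.exists_forall_hasFDerivAt_of_fderiv_symmetric hso (ω := fun y => L (f y))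
    (fun y hy => (hLf y hy).differentiableAt.differentiableWithinAt) (fun y hy u v => by
      rw [(hLf y hy).fderiv, L.comp_apply, L.comp_apply, hL, hL,
        fderiv_apply_eq_jacobian_mulVec (hdiff y hy), fderiv_apply_eq_jacobian_mulVec (hdiff y hy),
        dotProduct_comm, dotProduct_mulVec, ← mulVec_transpose, hsymm y hy])
  refine ⟨F, ?_, fun y hy i => ?_⟩
  · rw [show (1 : WithTop ℕ∞) = 0 + 1 from rfl, contDiffOn_succ_iff_fderiv_of_isOpen hso]
    refine ⟨fun y hy => (hF y hy).differentiableAt.differentiableWithinAt, by simp, ?_⟩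
    exact ((L.contDiff.comp_contDiffOn hf).of_le zero_le_one).congr fun y hy => (hF y hy).fderiv
  · rw [(hF y hy).fderiv, hL]
    simp

theorem existence_of_extended_generating_functions_general
    (n : ℕ) (μ : ℝ)
    (J : Matrix (Fin n ⊕ Fin n) (Fin n ⊕ Fin n) ℝ)
    (M : ((Fin n ⊕ Fin n) → ℝ) → (Fin n ⊕ Fin n) → ℝ)
    (hMsmooth : ContDiff ℝ 2 M)
    (hMsymp : ∀ x : (Fin n ⊕ Fin n) → ℝ,
      (Matrix.of fun i j => fderiv ℝ (fun y => M y i) x (Pi.single j 1))ᵀ * J *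
        (Matrix.of fun i j => fderiv ℝ (fun y => M y i) x (Pi.single j 1)) = J)
    (α : (((Fin n ⊕ Fin n) ⊕ (Fin n ⊕ Fin n)) → ℝ) →
      ((Fin n ⊕ Fin n) ⊕ (Fin n ⊕ Fin n)) → ℝ)
    (hα : ContDiff ℝ 1 α)
    (hαconf : ∀ w : ((Fin n ⊕ Fin n) ⊕ (Fin n ⊕ Fin n)) → ℝ,
      (Matrix.of fun i j => fderiv ℝ (fun y => α y i) w (Pi.single j 1))ᵀ *
          Matrix.fromBlocks 0 1 (-1) 0 *
        (Matrix.of fun i j => fderiv ℝ (fun y => α y i) w (Pi.single j 1)) =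
      μ • Matrix.fromBlocks J 0 0 (-J))
    (z : (Fin n ⊕ Fin n) → ℝ)
    (hdet :
      (Matrix.of (fun i j => fderiv ℝ (fun y => α y (Sum.inr i)) (Sum.elim (M z) z)
            (Pi.single (Sum.inl j) 1)) *
          Matrix.of (fun i j => fderiv ℝ (fun y => M y i) z (Pi.single j 1)) +
        Matrix.of (fun i j => fderiv ℝ (fun y => α y (Sum.inr i)) (Sum.elim (M z) z)
            (Pi.single (Sum.inr j) 1))).det ≠ 0) :
    ∃ U : Set ((Fin n ⊕ Fin n) → ℝ), IsOpen U ∧ z ∈ U ∧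
      Set.InjOn (fun x i => α (Sum.elim (M x) x) (Sum.inr i)) U ∧
      IsOpen ((fun x i => α (Sum.elim (M x) x) (Sum.inr i)) '' U) ∧
      (∃ ginv : ((Fin n ⊕ Fin n) → ℝ) → (Fin n ⊕ Fin n) → ℝ,
        ContDiffOn ℝ 1 ginv ((fun x i => α (Sum.elim (M x) x) (Sum.inr i)) '' U) ∧
        (∀ x ∈ U, ginv (fun i => α (Sum.elim (M x) x) (Sum.inr i)) = x) ∧
        ∀ y ∈ (fun x i => α (Sum.elim (M x) x) (Sum.inr i)) '' U,
          (fun i => α (Sum.elim (M (ginv y)) (ginv y)) (Sum.inr i)) = y) ∧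
      ∃ F : ((Fin n ⊕ Fin n) → ℝ) → ℝ,
        ContDiffOn ℝ 1 F ((fun x i => α (Sum.elim (M x) x) (Sum.inr i)) '' U) ∧
        ∀ x ∈ U, ∀ i : Fin n ⊕ Fin n,
          fderiv ℝ F (fun k => α (Sum.elim (M x) x) (Sum.inr k)) (Pi.single i 1) =
            α (Sum.elim (M x) x) (Sum.inl i) := by
  set p := fun x i => α (Sum.elim (M x) x) (Sum.inl i)
  set g := fun x i => α (Sum.elim (M x) x) (Sum.inr i)
  have hM : ContDiff ℝ 1 M := hMsmooth.of_le (by norm_num)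
  have hMd := hM.differentiable one_ne_zero
  have hαd := hα.differentiable one_ne_zero
  have hp : ContDiff ℝ 1 p := contDiff_pi.2 fun i => (contDiff_pi.1 hα _).comp hM.sumElim_self
  have hg : ContDiff ℝ 1 g := contDiff_pi.2 fun i => (contDiff_pi.1 hα _).comp hM.sumElim_self
  have hlagrangian : ∀ x, (jacobian p x)ᵀ * jacobian g x = (jacobian g x)ᵀ * jacobian p x :=
    fun x => transpose_mul_eq_of_conformal_mul_graph (hαconf _) (hMsymp x)
      (fromRows_jacobian_comp_sumElim_self (hαd _) (hMd x)).symm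
  have hz : (fderiv ℝ g z).IsInvertible := by
    rw [isInvertible_fderiv_iff_isUnit_jacobian (hg.differentiable one_ne_zero z),
      jacobian_comp_sumElim_self_inr (hαd _) (hMd z), isUnit_iff_isUnit_det, isUnit_iff_ne_zero]
    exact hdet
  obtain ⟨U, hU, hzU, hinv, r, -, himage, ginv, hleft, hginv⟩ := hg.exists_ball_leftInvOn hz
  have hsymm : ∀ y ∈ ball (g z) r, (jacobian (p ∘ ginv) y)ᵀ = jacobian (p ∘ ginv) y := by
    rw [← himage]
    rintro _ ⟨x, hx, rfl⟩
    have hgx := hg.differentiable one_ne_zero x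
    have hpx := ((hp.comp_contDiffOn hginv).contDiffAt
      (isOpen_ball.mem_nhds (himage ▸ mem_image_of_mem g hx))).differentiableAt one_ne_zero
    refine transpose_eq_of_transpose_mul_comm
      ((isInvertible_fderiv_iff_isUnit_jacobian hgx).1 (hinv x hx)) ?_
    rw [jacobian_comp_mul_of_leftInvOn hU hleft hx hpx hgx]
    exact hlagrangian x
  obtain ⟨F, hF, hgradF⟩ := (convex_ball (g z) r).exists_potential_of_transpose_jacobian_eq
    isOpen_ball (hp.comp_contDiffOn hginv) hsymm
  rw [← himage] at hF hgradF
  refine ⟨U, hU, hzU, hleft.injOn, himage ▸ isOpen_ball,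
    ⟨ginv, himage ▸ hginv, hleft, hleft.rightInvOn_image⟩, F, hF, fun x hx i => ?_⟩
  rw [hgradF _ (mem_image_of_mem g hx), Function.comp_apply, hleft hx]

/-- **Existence of extended generating functions.** Let `ℳ` be a C² symplectic map
on `ℝ²ⁿ` and `α = (α₁, α₂)ᵀ` a C¹ conformal symplectic map on `ℝ⁴ⁿ` with Jacobian
blocks `[[A, B], [C, D]]`. If `det(C(ℳ(z), z)·M(z) + D(ℳ(z), z)) ≠ 0`, then on a
neighborhood `U` of `z` the map `g = α₂ ∘ (ℳ, Id)` is a C¹ diffeomorphism onto its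
image, and there is a C¹ function `F` on `g(U)` with
`(∇F)ᵀ = (α₁ ∘ (ℳ, Id)) ∘ (α₂ ∘ (ℳ, Id))⁻¹`, i.e. `∇F(g(x)) = α₁(ℳ(x), x)` on `U`. -/
theorem existence_of_extended_generating_functions
    (n : ℕ) (hn : 1 ≤ n) (μ : ℝ) (hμ : μ ≠ 0)
    (J : Matrix (Fin n ⊕ Fin n) (Fin n ⊕ Fin n) ℝ)
    (hJ : J = Matrix.fromBlocks 0 1 (-1) 0)
    (M : ((Fin n ⊕ Fin n) → ℝ) → (Fin n ⊕ Fin n) → ℝ)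
    (hMsmooth : ContDiff ℝ 2 M)
    (hMsymp : ∀ x : (Fin n ⊕ Fin n) → ℝ,
      (Matrix.of fun i j => fderiv ℝ (fun y => M y i) x (Pi.single j 1))ᵀ * J *
        (Matrix.of fun i j => fderiv ℝ (fun y => M y i) x (Pi.single j 1)) = J)
    (α : (((Fin n ⊕ Fin n) ⊕ (Fin n ⊕ Fin n)) → ℝ) →
      ((Fin n ⊕ Fin n) ⊕ (Fin n ⊕ Fin n)) → ℝ)
    (hα : ContDiff ℝ 1 α)
    (hαconf : ∀ w : ((Fin n ⊕ Fin n) ⊕ (Fin n ⊕ Fin n)) → ℝ,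
      (Matrix.of fun i j => fderiv ℝ (fun y => α y i) w (Pi.single j 1))ᵀ *
          Matrix.fromBlocks 0 1 (-1) 0 *
        (Matrix.of fun i j => fderiv ℝ (fun y => α y i) w (Pi.single j 1)) =
      μ • Matrix.fromBlocks J 0 0 (-J))
    (z : (Fin n ⊕ Fin n) → ℝ)
    (hdet :
      (Matrix.of (fun i j => fderiv ℝ (fun y => α y (Sum.inr i)) (Sum.elim (M z) z)
            (Pi.single (Sum.inl j) 1)) *
          Matrix.of (fun i j => fderiv ℝ (fun y => M y i) z (Pi.single j 1)) +
        Matrix.of (fun i j => fderiv ℝ (fun y => α y (Sum.inr i)) (Sum.elim (M z) z)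
            (Pi.single (Sum.inr j) 1))).det ≠ 0) :
    ∃ U : Set ((Fin n ⊕ Fin n) → ℝ), IsOpen U ∧ z ∈ U ∧
      Set.InjOn (fun x i => α (Sum.elim (M x) x) (Sum.inr i)) U ∧
      IsOpen ((fun x i => α (Sum.elim (M x) x) (Sum.inr i)) '' U) ∧
      (∃ ginv : ((Fin n ⊕ Fin n) → ℝ) → (Fin n ⊕ Fin n) → ℝ,
        ContDiffOn ℝ 1 ginv ((fun x i => α (Sum.elim (M x) x) (Sum.inr i)) '' U) ∧
        (∀ x ∈ U, ginv (fun i => α (Sum.elim (M x) x) (Sum.inr i)) = x) ∧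
        ∀ y ∈ (fun x i => α (Sum.elim (M x) x) (Sum.inr i)) '' U,
          (fun i => α (Sum.elim (M (ginv y)) (ginv y)) (Sum.inr i)) = y) ∧
      ∃ F : ((Fin n ⊕ Fin n) → ℝ) → ℝ,
        ContDiffOn ℝ 1 F ((fun x i => α (Sum.elim (M x) x) (Sum.inr i)) '' U) ∧
        ∀ x ∈ U, ∀ i : Fin n ⊕ Fin n,
          fderiv ℝ F (fun k => α (Sum.elim (M x) x) (Sum.inr k)) (Pi.single i 1) =
            α (Sum.elim (M x) x) (Sum.inl i) :=
  existence_of_extended_generating_functions_general n μ J M hMsmooth hMsymp α hα hαconf z hdet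
end

section
/- Let n ≥ 1, let L be a 2n×2n symplectic matrix (Lᵀ J_{2n} L = J_{2n}), and let S be a symmetric real 2n×2n matrix. Then the linear map α on ℝ^{4n} given in 2n×2n block form by the matrix [[−J_{2n} L⁻¹, J_{2n}], [½(I_{2n} + J_{2n} S) L⁻¹, ½(I_{2n} − J_{2n} S)]] is conformal symplectic: there exists a nonzero real constant μ such that Gᵀ J_{4n} G = μ J̃_{4n}, where G is the above block matrix. -/
open Matrix

/-!
Writing `M = L⁻¹`, which is again symplectic, the four `2n × 2n` blocks of `Gᵀ J₄ₙ G` are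
`AᵀC - CᵀA`, `AᵀD - CᵀB`, `BᵀC - DᵀA` and `BᵀD - DᵀB` for `G = [[A, B], [C, D]]`.
Using only `J² = -1`, `Jᵀ = -J`, `Sᵀ = S` and `Mᵀ J M = J`, the symmetric terms in `S` cancel
and these blocks reduce to `J`, `0`, `0` and `-J`, so `μ = 1`.
-/

theorem Matrix.fromBlocks_transpose_mul_fromBlocks_zero_one_mul_fromBlocks
    {m R : Type*} [Fintype m] [DecidableEq m] [CommRing R] (A B C D : Matrix m m R) :
    (fromBlocks A B C D)ᵀ * fromBlocks 0 1 (-1) 0 * fromBlocks A B C D =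
      fromBlocks (Aᵀ * C - Cᵀ * A) (Aᵀ * D - Cᵀ * B)
        (Bᵀ * C - Dᵀ * A) (Bᵀ * D - Dᵀ * B) := by
  simp only [fromBlocks_transpose, fromBlocks_multiply, Matrix.mul_zero, Matrix.mul_one,
    Matrix.mul_neg, add_zero, neg_mul, ← sub_eq_add_neg, sub_eq_neg_add]

theorem Matrix.fromBlocks_zero_one_neg_one_zero_eq_neg_J {l R : Type*} [DecidableEq l]
    [CommRing R] : fromBlocks (0 : Matrix l l R) 1 (-1) 0 = -J l R := by
  simp [J, fromBlocks_neg]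

theorem Matrix.nonsing_inv_mem_symplecticGroup {l R : Type*} [Fintype l] [DecidableEq l]
    [CommRing R] {L : Matrix (l ⊕ l) (l ⊕ l) R} (hL : L ∈ symplecticGroup l R) :
    L⁻¹ ∈ symplecticGroup l R :=
  SymplecticGroup.coe_inv' ⟨L, hL⟩ ▸ (⟨L, hL⟩⁻¹ : symplecticGroup l R).2

section GeneratorType

variable {m R : Type*} [Fintype m] [DecidableEq m] [Field R]

/-- The linear generator `α` of type `[S]` for the symplectic map with linear part `M⁻¹`. -/
def generatorType (J M S : Matrix m m R) : Matrix (m ⊕ m) (m ⊕ m) R :=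
  fromBlocks (-(J * M)) J ((2⁻¹ : R) • ((1 + J * S) * M)) ((2⁻¹ : R) • (1 - J * S))

theorem generatorType_transpose_mul_fromBlocks_zero_one_mul_self [CharZero R]
    {J M S : Matrix m m R} (hJJ : J * J = -1) (hJT : Jᵀ = -J) (hM : Mᵀ * J * M = J)
    (hS : Sᵀ = S) :
    (generatorType J M S)ᵀ * fromBlocks 0 1 (-1) 0 * generatorType J M S =
      fromBlocks J 0 0 (-J) := by
  have hJJ' (X : Matrix m m R) : J * (J * X) = -X := by
    rw [← Matrix.mul_assoc, hJJ, neg_one_mul]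
  have hM' : Mᵀ * (J * M) = J := by rw [← Matrix.mul_assoc, hM]
  rw [generatorType, fromBlocks_transpose_mul_fromBlocks_zero_one_mul_fromBlocks]
  congr 1 <;>
  · simp only [transpose_smul, transpose_mul, transpose_neg, transpose_sub, transpose_add,
      transpose_one, hJT, hS, Matrix.mul_one, Matrix.one_mul, neg_mul, Matrix.mul_neg, neg_neg,
      smul_mul_assoc, mul_smul_comm, Matrix.mul_add, Matrix.add_mul, Matrix.mul_sub,
      Matrix.sub_mul, Matrix.mul_assoc, hJJ', hJJ, hM']
    module

end GeneratorType

theorem generator_type_conformal_symplectic_general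
    (n : ℕ)
    (L S : Matrix (Fin n ⊕ Fin n) (Fin n ⊕ Fin n) ℝ)
    (J : Matrix (Fin n ⊕ Fin n) (Fin n ⊕ Fin n) ℝ)
    (hJ : J = Matrix.fromBlocks 0 1 (-1) 0)
    (hL : Lᵀ * J * L = J)
    (hS : Sᵀ = S) :
    ∃ μ : ℝ, μ ≠ 0 ∧
      (Matrix.fromBlocks (-(J * L⁻¹)) J
          ((2⁻¹ : ℝ) • ((1 + J * S) * L⁻¹)) ((2⁻¹ : ℝ) • (1 - J * S)))ᵀ *
        Matrix.fromBlocks 0 1 (-1) 0 *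
        Matrix.fromBlocks (-(J * L⁻¹)) J
          ((2⁻¹ : ℝ) • ((1 + J * S) * L⁻¹)) ((2⁻¹ : ℝ) • (1 - J * S)) =
      μ • Matrix.fromBlocks J 0 0 (-J) := by
  rw [fromBlocks_zero_one_neg_one_zero_eq_neg_J] at hJ
  subst hJ
  have hL' : L ∈ symplecticGroup (Fin n) ℝ := by
    simpa [SymplecticGroup.mem_iff'] using hL
  have hLinv : (L⁻¹)ᵀ * -J (Fin n) ℝ * L⁻¹ = -J (Fin n) ℝ := by
    simpa using SymplecticGroup.mem_iff'.1 (nonsing_inv_mem_symplecticGroup hL')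
  refine ⟨1, one_ne_zero, ?_⟩
  rw [one_smul]
  exact generatorType_transpose_mul_fromBlocks_zero_one_mul_self (by simp [J_squared])
    (by rw [transpose_neg, J_transpose]) hLinv hS

/-- For a symplectic matrix `L` and a symmetric matrix `S`, the block matrix
`[[-J L⁻¹, J], [½(I + J S) L⁻¹, ½(I - J S)]]` is conformal symplectic:
there is a nonzero `μ` with `Gᵀ J₄ₙ G = μ J̃₄ₙ`. -/
theorem generator_type_conformal_symplectic
    (n : ℕ) (hn : 1 ≤ n)
    (L S : Matrix (Fin n ⊕ Fin n) (Fin n ⊕ Fin n) ℝ)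
    (J : Matrix (Fin n ⊕ Fin n) (Fin n ⊕ Fin n) ℝ)
    (hJ : J = Matrix.fromBlocks 0 1 (-1) 0)
    (hL : Lᵀ * J * L = J)
    (hS : Sᵀ = S) :
    ∃ μ : ℝ, μ ≠ 0 ∧
      (Matrix.fromBlocks (-(J * L⁻¹)) J
          ((2⁻¹ : ℝ) • ((1 + J * S) * L⁻¹)) ((2⁻¹ : ℝ) • (1 - J * S)))ᵀ *
        Matrix.fromBlocks 0 1 (-1) 0 *
        Matrix.fromBlocks (-(J * L⁻¹)) J
          ((2⁻¹ : ℝ) • ((1 + J * S) * L⁻¹)) ((2⁻¹ : ℝ) • (1 - J * S)) =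
      μ • Matrix.fromBlocks J 0 0 (-J) :=
  generator_type_conformal_symplectic_general n L S J hJ hL hS
end
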